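/- Let 1/2 ≤ m < 1 and set α = 2−m, m₁ = 2m−1, m₀ = 2m/(3−m). Then for all real x, y with x ≥ 0, y ≥ 1/3, and 3x + (α+1)y = α, the quantity f(x,y) := m₁ + 2 − 2m₀ − (3m₁ + 4 − 4m₀)x − 2y satisfies f(x,y) ≥ 0. Consequently, for exponents s₂ > 3 and l₂ < 3 with 3/s₂ + (α+1)/l₂ = α and 2/s₂ + 1/l₂ < 1, the quantity 2m₀^{(2)} := m₁(s₂−3)/(s₂−2) + 2(1 − s₂/((s₂−2) l₂)) satisfies 2m₀^{(2)} ≥ 2m₀. -/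

import Mathlib

open Real Set

/-! On the line `3x + (3 - m)y = 2 - m` and with `(3 - m)m₀ = 2m`, the form `f` collapses to
`(3 - m) f(x, y) = (2m - 1)(1 - m)(1 - 3x)`, and `y ≥ 1/3` forces `3x ≤ 1`; hence `f ≥ 0` for
`1/2 ≤ m ≤ 1`. The exponent statement follows from the identity
`2m₀⁽²⁾ - 2m₀ = f(1/s₂, 1/l₂) · s₂/(s₂ - 2)`. -/

/-- The paper's `f(x, y)`. -/
def gapForm (m₁ m₀ x y : ℝ) : ℝ :=
  m₁ + 2 - 2 * m₀ - (3 * m₁ + 4 - 4 * m₀) * x - 2 * y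

lemma mul_gapForm_eq_of_line {m m₀ x y : ℝ} (hm₀ : m₀ * (3 - m) = 2 * m)
    (hline : 3 * x + (3 - m) * y = 2 - m) :
    (3 - m) * gapForm (2 * m - 1) m₀ x y = (2 * m - 1) * (1 - m) * (1 - 3 * x) := by
  unfold gapForm
  linear_combination (4 * x - 2) * hm₀ - 2 * hline

lemma gapForm_nonneg_of_line {m x y : ℝ} (hm : 1 / 2 ≤ m) (hm' : m ≤ 1) (hy : 1 / 3 ≤ y)
    (hline : 3 * x + (3 - m) * y = 2 - m) :
    0 ≤ gapForm (2 * m - 1) (2 * m / (3 - m)) x y := by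
  have h3m : 0 < 3 - m := by linarith
  have hx : 0 ≤ 1 - 3 * x := by nlinarith
  have hprod := mul_gapForm_eq_of_line (div_mul_cancel₀ (2 * m) h3m.ne') hline
  have : 0 ≤ (3 - m) * gapForm (2 * m - 1) (2 * m / (3 - m)) x y := by
    rw [hprod]
    exact mul_nonneg (mul_nonneg (by linarith) (by linarith)) hx
  exact nonneg_of_mul_nonneg_right (by linarith) h3m

lemma exponent_sub_eq_gapForm_mul {m₁ m₀ s l : ℝ} (hs : s ≠ 0) (hs2 : s - 2 ≠ 0) (hl : l ≠ 0) :
    m₁ * (s - 3) / (s - 2) + 2 * (1 - s / ((s - 2) * l)) - 2 * m₀ =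
      gapForm m₁ m₀ (1 / s) (1 / l) * (s / (s - 2)) := by
  unfold gapForm
  field_simp
  ring

/-- The key algebraic inequality in the second case (`s₂ > 3`, `l₂ < 3`) of the
second method: the affine function
`f(x,y) = m₁ + 2 - 2m₀ - (3m₁ + 4 - 4m₀)x - 2y` is nonnegative on the segment
`{x ≥ 0, y ≥ 1/3, 3x + (α+1)y = α}`, and consequently the exponent
`2m₀⁽²⁾ = m₁(s₂-3)/(s₂-2) + 2(1 - s₂/((s₂-2)l₂))` satisfies `2m₀⁽²⁾ ≥ 2m₀`. -/
theorem second_method_case_l_lt_three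
    (m α m₁ m₀ : ℝ) (hm : 1 / 2 ≤ m) (hm' : m < 1)
    (hα : α = 2 - m) (hm₁ : m₁ = 2 * m - 1) (hm₀ : m₀ = 2 * m / (3 - m)) :
    (∀ x y : ℝ, 0 ≤ x → 1 / 3 ≤ y → 3 * x + (α + 1) * y = α →
      0 ≤ m₁ + 2 - 2 * m₀ - (3 * m₁ + 4 - 4 * m₀) * x - 2 * y) ∧
    (∀ s₂ l₂ : ℝ, 3 < s₂ → 1 ≤ l₂ → l₂ < 3 →
      3 / s₂ + (α + 1) / l₂ = α → 2 / s₂ + 1 / l₂ < 1 →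
      2 * m₀ ≤ m₁ * (s₂ - 3) / (s₂ - 2) + 2 * (1 - s₂ / ((s₂ - 2) * l₂))) := by
  subst hα hm₁ hm₀
  have hf : ∀ x y : ℝ, 1 / 3 ≤ y → 3 * x + (2 - m + 1) * y = 2 - m →
      0 ≤ gapForm (2 * m - 1) (2 * m / (3 - m)) x y := fun x y hy hline =>
    gapForm_nonneg_of_line hm hm'.le hy (by linear_combination hline)
  refine ⟨fun x y _ hy hline => hf x y hy hline, ?_⟩
  intro s₂ l₂ hs hl1 hl3 hline _
  have hl0 : 0 < l₂ := by linarith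
  have hy : 1 / 3 ≤ 1 / l₂ := one_div_le_one_div_of_le hl0 hl3.le
  have hgap := hf (1 / s₂) (1 / l₂) hy (by linear_combination hline)
  have hdiff := exponent_sub_eq_gapForm_mul (m₁ := 2 * m - 1) (m₀ := 2 * m / (3 - m))
    (by linarith : s₂ ≠ 0) (by linarith : s₂ - 2 ≠ 0) hl0.ne'
  have hratio : 0 ≤ s₂ / (s₂ - 2) := div_nonneg (by linarith) (by linarith)
  linarith [mul_nonneg hgap hratio]
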